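/- Let n ≥ 2 and let x, y : {1,…,n} → {0,1}. In the graph D(x,y): if there exists an index i with x_i = y_i = 1, then there exist two vertices at distance at least 8 (the diameter of D(x,y) is at least 8); if there is no such index, then every two vertices of D(x,y) are at distance at most 7. -/

import Mathlib

/-!
If `x i = y i = 1`, the `i`-th path carries no chords, so its middle vertex `p i 4` (the
paper's `p_{i,5}`) is at distance at least 5 from every `c j` and at least 6 from `a` and `b`.
The even-indexed inner vertices of any other path are two steps away from all of these, so
`p k 4` with `k ≠ i` is at distance at least 8; a potential changing by at most one along
edges certifies this. Otherwise every vertex lies within distance 3 of `a` or of `b` (of `a`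
on a path with `x m = 0`, of `b` on one with `y m = 0`), and `a ~ b` gives 3 + 1 + 3.
-/

/-- Vertices of the `Diamond` construction: `a`, `b`, `c j` for `j ∈ {0, …, n}`
(encoded as `Fin (n+1)`), and `p i j` for `i ∈ {1, …, n}` (encoded as `Fin n`)
and `j ∈ {1, …, 9}` (encoded as `Fin 9`). -/
inductive DVert (n : ℕ) : Type
  | a : DVert n
  | b : DVert n
  | c : Fin (n + 1) → DVert n
  | p : Fin n → Fin 9 → DVert n

/-- Edges of `D(x, y)`: `a ~ b`; `a ~ c j` and `b ~ c j` for all `j`;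
path edges `p i j ~ p i (j+1)`; `c_{i-1} ~ p_{i,1}` and `p_{i,9} ~ c_i`;
`a ~ p_{i,2}` and `a ~ p_{i,6}` iff `x i = 0`;
`b ~ p_{i,4}` and `b ~ p_{i,8}` iff `y i = 0`; no other edges. -/
def dRel {n : ℕ} (x y : Fin n → Fin 2) : DVert n → DVert n → Prop
  | .a, .b => True
  | .a, .c _ => True
  | .b, .c _ => True
  | .p i j, .p k l => i = k ∧ (l : ℕ) = (j : ℕ) + 1
  | .c j, .p i l => (j = i.castSucc ∧ l = 0) ∨ (j = i.succ ∧ l = 8)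
  | .a, .p i j => (j = 1 ∨ j = 5) ∧ x i = 0
  | .b, .p i j => (j = 3 ∨ j = 7) ∧ y i = 0
  | _, _ => False

/-- The `Diamond` graph. -/
def DGraph {n : ℕ} (x y : Fin n → Fin 2) : SimpleGraph (DVert n) :=
  SimpleGraph.fromRel (dRel x y)

namespace SimpleGraph

variable {V : Type*} {G : SimpleGraph V}

theorem Walk.le_apply_add_length (f : V → ℕ) (hf : ∀ ⦃u v⦄, G.Adj u v → f v ≤ f u + 1)
    {u v : V} (p : G.Walk u v) : f v ≤ f u + p.length := by
  induction p with
  | nil => simp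
  | cons h _ ih => have := hf h; simp only [Walk.length_cons]; omega

theorem Reachable.le_apply_add_dist (f : V → ℕ) (hf : ∀ ⦃u v⦄, G.Adj u v → f v ≤ f u + 1)
    {u v : V} (h : G.Reachable u v) : f v ≤ f u + G.dist u v := by
  obtain ⟨p, hp⟩ := h.exists_walk_length_eq_dist
  exact hp ▸ p.le_apply_add_length f hf

theorem Connected.dist_le_dist_add_one_of_adj (hG : G.Connected) {u v w : V} (h : G.Adj v w) :
    G.dist u w ≤ G.dist u v + 1 :=
  hG.dist_triangle.trans_eq (by rw [dist_eq_one_iff_adj.2 h])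

end SimpleGraph

namespace DGraph

open SimpleGraph

variable {n : ℕ} {x y : Fin n → Fin 2}

theorem a_adj_b : (DGraph x y).Adj .a .b := by simp [DGraph, dRel]

theorem a_adj_c (j : Fin (n + 1)) : (DGraph x y).Adj .a (.c j) := by simp [DGraph, dRel]

theorem b_adj_c (j : Fin (n + 1)) : (DGraph x y).Adj .b (.c j) := by simp [DGraph, dRel]

theorem c_castSucc_adj_p_zero (m : Fin n) : (DGraph x y).Adj (.c m.castSucc) (.p m 0) := by
  simp [DGraph, dRel]

theorem c_succ_adj_p_eight (m : Fin n) : (DGraph x y).Adj (.c m.succ) (.p m 8) := by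
  simp [DGraph, dRel]

theorem a_adj_p {m : Fin n} (hm : x m = 0) {j : Fin 9} (hj : j = 1 ∨ j = 5) :
    (DGraph x y).Adj .a (.p m j) := by
  simp [DGraph, dRel, hm, hj]

theorem b_adj_p {m : Fin n} (hm : y m = 0) {j : Fin 9} (hj : j = 3 ∨ j = 7) :
    (DGraph x y).Adj .b (.p m j) := by
  simp [DGraph, dRel, hm, hj]

theorem p_adj_p_succ (m : Fin n) {j k : Fin 9} (h : (k : ℕ) = j + 1) :
    (DGraph x y).Adj (.p m j) (.p m k) := by
  refine ⟨fun he => ?_, .inl ⟨rfl, h⟩⟩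
  cases he
  omega

theorem exists_walk_p_p (m : Fin n) {j : ℕ} (hj : j < 9) :
    ∀ d (hd : j + d < 9), ∃ p : (DGraph x y).Walk (.p m ⟨j, hj⟩) (.p m ⟨j + d, hd⟩), p.length = d
  | 0, _ => ⟨.nil, rfl⟩
  | d + 1, hd => by
    obtain ⟨p, hp⟩ := exists_walk_p_p m hj d (by omega)
    exact ⟨p.concat (p_adj_p_succ m rfl), by simp [hp]⟩

theorem dist_p_p_le (m : Fin n) (j k : Fin 9) :
    (DGraph x y).dist (.p m j) (.p m k) ≤ (j : ℕ) - k + (k - j) := by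
  wlog hjk : j ≤ k generalizing j k
  · rw [dist_comm]; have := this k j (by omega); omega
  obtain ⟨j, hj⟩ := j
  obtain ⟨k, hk⟩ := k
  obtain ⟨d, rfl⟩ : ∃ d, k = j + d := ⟨k - j, by simp only [Fin.mk_le_mk] at hjk; omega⟩
  obtain ⟨p, hp⟩ := exists_walk_p_p (x := x) (y := y) m hj d hk
  simpa [hp] using dist_le p

theorem reachable_a (u : DVert n) : (DGraph x y).Reachable .a u := by
  cases u with
  | a => rfl
  | b => exact a_adj_b.reachable
  | c j => exact (a_adj_c j).reachable
  | p m j =>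
    obtain ⟨p, -⟩ := exists_walk_p_p (x := x) (y := y) m (Nat.zero_lt_succ 8) j (by simp)
    exact (a_adj_c _).reachable.trans <| (c_castSucc_adj_p_zero m).reachable.trans
      ⟨p.copy rfl (by simp)⟩

theorem connected : (DGraph x y).Connected :=
  { preconnected := fun u v => (reachable_a u).symm.trans (reachable_a v), nonempty := ⟨.a⟩ }

theorem dist_p_le_of_adj {m : Fin n} {k : Fin 9} {v : DVert n} (h : (DGraph x y).Adj (.p m k) v)
    (j : Fin 9) : (DGraph x y).dist (.p m j) v ≤ (j : ℕ) - k + (k - j) + 1 :=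
  (connected.dist_le_dist_add_one_of_adj h).trans (by grw [dist_p_p_le])

theorem dist_a_le_or_dist_b_le (hxy : ∀ m, x m = 0 ∨ y m = 0) (u : DVert n) :
    (DGraph x y).dist u .a ≤ 3 ∨ (DGraph x y).dist u .b ≤ 3 := by
  cases u with
  | a => simp
  | b => exact .inl ((dist_eq_one_iff_adj.2 a_adj_b.symm).trans_le (by norm_num))
  | c j => exact .inl ((dist_eq_one_iff_adj.2 (a_adj_c j).symm).trans_le (by norm_num))
  | p m j =>
    have hj := j.isLt
    have near {k : Fin 9} {v : DVert n} (h : (DGraph x y).Adj (.p m k) v) :=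
      dist_p_le_of_adj h j
    have via {v w : DVert n} (h : (DGraph x y).Adj v w) :=
      connected.dist_le_dist_add_one_of_adj (u := .p m j) h
    rcases hxy m with hx | hy
    · have h1 := near (a_adj_p hx (j := 1) (by simp)).symm
      have h5 := near (a_adj_p hx (j := 5) (by simp)).symm
      have h8 := near (c_succ_adj_p_eight m).symm
      have hc := via (a_adj_c m.succ).symm
      
      omega
    · have h3 := near (b_adj_p hy (j := 3) (by simp)).symm
      have h7 := near (b_adj_p hy (j := 7) (by simp)).symm
      have h0 := near (c_castSucc_adj_p_zero m).symm
      have hc := via (b_adj_c m.castSucc).symm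
      
      omega

theorem dist_le_seven (hxy : ∀ m, x m = 0 ∨ y m = 0) (u w : DVert n) :
    (DGraph x y).dist u w ≤ 7 := by
  have hG : (DGraph x y).Connected := connected
  have hab : (DGraph x y).dist .a .b ≤ 1 := (dist_eq_one_iff_adj.2 a_adj_b).le
  have hba : (DGraph x y).dist .b .a ≤ 1 := dist_comm (G := DGraph x y) ▸ hab
  have via {s t : DVert n} (hus : (DGraph x y).dist u s ≤ 3) (hst : (DGraph x y).dist s t ≤ 1)
      (hwt : (DGraph x y).dist w t ≤ 3) : (DGraph x y).dist u w ≤ 7 :=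
    calc _ ≤ (DGraph x y).dist u s + ((DGraph x y).dist s t + (DGraph x y).dist t w) :=
          hG.dist_triangle.trans (add_le_add_right hG.dist_triangle _)
      _ ≤ 3 + (1 + 3) := by rw [dist_comm (u := t)]; gcongr
  rcases dist_a_le_or_dist_b_le hxy u with hu | hu <;>
    rcases dist_a_le_or_dist_b_le hxy w with hw | hw
  exacts [via hu (by simp) hw, via hu hab hw, via hu hba hw, via hu (by simp) hw]

-- A lower bound for the distance from `p i 4` when `x i = y i = 1`, exact on the `i`-th path.
def midPotential (i : Fin n) : DVert n → ℕ
  | .a | .b => 6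
  | .c _ => 5
  | .p m j => if m = i then ![4, 3, 2, 1, 0, 1, 2, 3, 4] j else ![6, 7, 8, 7, 8, 7, 8, 7, 6] j

theorem midPotential_le_of_dRel {i : Fin n} (hx : x i = 1) (hy : y i = 1)
    {u v : DVert n} (h : dRel x y u v) :
    midPotential i v ≤ midPotential i u + 1 ∧ midPotential i u ≤ midPotential i v + 1 := by
  cases u <;> cases v <;> simp only [dRel] at h
  case a.p m j =>
    obtain ⟨hj, hm⟩ := h
    have hmi : m ≠ i := by rintro rfl; simp_all
    rcases hj with rfl | rfl <;> simp [midPotential, hmi]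
  case b.p m j =>
    obtain ⟨hj, hm⟩ := h
    have hmi : m ≠ i := by rintro rfl; simp_all
    rcases hj with rfl | rfl <;> simp [midPotential, hmi]
  case c.p m j =>
    rcases h with ⟨-, rfl⟩ | ⟨-, rfl⟩ <;> simp only [midPotential] <;> split_ifs <;> simp
  case p.p m j k l =>
    obtain ⟨rfl, h⟩ := h
    simp only [midPotential]
    split_ifs <;> fin_cases j <;> fin_cases l <;> simp_all
  all_goals simp [midPotential]

theorem midPotential_le_of_adj {i : Fin n} (hx : x i = 1) (hy : y i = 1) ⦃u v : DVert n⦄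
    (h : (DGraph x y).Adj u v) : midPotential i v ≤ midPotential i u + 1 := by
  obtain ⟨-, h | h⟩ := h
  exacts [(midPotential_le_of_dRel hx hy h).1, (midPotential_le_of_dRel hx hy h).2]

theorem eight_le_dist {i k : Fin n} (hx : x i = 1) (hy : y i = 1) (hk : k ≠ i) :
    8 ≤ (DGraph x y).dist (.p i 4) (.p k 4) := by
  have := (connected.preconnected (.p i 4) (.p k 4)).le_apply_add_dist _
    (midPotential_le_of_adj hx hy)
  simpa [midPotential, hk] using this

end DGraph

theorem stmt_9 {n : ℕ} (hn : 2 ≤ n) (x y : Fin n → Fin 2) :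
    ((∃ i, x i = 1 ∧ y i = 1) →
      ∃ u w : DVert n, 8 ≤ (DGraph x y).dist u w) ∧
    ((¬ ∃ i, x i = 1 ∧ y i = 1) →
      ∀ u w : DVert n, (DGraph x y).dist u w ≤ 7) := by
  refine ⟨fun ⟨i, hx, hy⟩ => ?_, fun h => DGraph.dist_le_seven fun m => ?_⟩
  · have : Nontrivial (Fin n) := Fin.nontrivial_iff_two_le.2 hn
    obtain ⟨k, hk⟩ := exists_ne i
    exact ⟨_, _, DGraph.eight_le_dist hx hy hk⟩
  · by_contra! hm
    exact h ⟨m, by omega, by omega⟩
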